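/- Let τ ≥ 3 and let 1 ≤ k < k' ≤ ⌊τ/2⌋. Then the polynomials h(x,y) = x^{τ-k} y^k and h'(x,y) = x^{τ-k'} y^{k'} are not equivalent: there is no A ∈ GL(2,ℝ) with h(A(x,y)) = h'(x,y) for all (x,y). -/

import Mathlib

/-!
Evaluating `h ∘ A = h'` at `(1, 0)` and `(0, 1)` kills one entry in each column of `A`;
since `h ∘ A` is not identically zero, `A` is diagonal or antidiagonal. Then `h ∘ A` is a
scalar multiple of `x ^ (τ - k) * y ^ k` or of `x ^ k * y ^ (τ - k)`, and comparing exponents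
with those of `h'` gives `k = k'` or `k + k' = τ`, both excluded by `k < k' ≤ τ / 2`.
-/

section

variable {K : Type*} [Field K] [LinearOrder K] [IsStrictOrderedRing K]

theorem exponents_eq_of_smul_monomial_eq {c : K} {m n p q : ℕ}
    (h : ∀ x y : K, c * (x ^ m * y ^ n) = x ^ p * y ^ q) : m = p ∧ n = q := by
  have hc : c = 1 := by simpa using h 1 1
  subst hc
  have h2 : (1 : K) < 2 := one_lt_two
  exact ⟨(pow_right_inj₀ two_pos h2.ne').1 (by simpa using h 2 1),
    (pow_right_inj₀ two_pos h2.ne').1 (by simpa using h 1 2)⟩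

theorem exponents_of_linear_pow_mul_pow_eq_monomial {a b c d : K} {m n p q : ℕ}
    (hm : m ≠ 0) (hn : n ≠ 0) (hp : p ≠ 0) (hq : q ≠ 0)
    (h : ∀ x y : K, (a * x + b * y) ^ m * (c * x + d * y) ^ n = x ^ p * y ^ q) :
    (m = p ∧ n = q) ∨ (m = q ∧ n = p) := by
  have hac : a = 0 ∨ c = 0 := by
    simpa [zero_pow hq, pow_eq_zero_iff, hm, hn] using h 1 0
  have hbd : b = 0 ∨ d = 0 := by
    simpa [zero_pow hp, pow_eq_zero_iff, hm, hn] using h 0 1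
  rcases hac with rfl | rfl <;> rcases hbd with rfl | rfl
  · simpa [zero_pow hm] using h 1 1
  · refine Or.inr (exponents_eq_of_smul_monomial_eq (c := b ^ m * c ^ n) fun x y => ?_).symm
    rw [← h x y]
    ring
  · left
    refine exponents_eq_of_smul_monomial_eq (c := a ^ m * d ^ n) fun x y => ?_
    rw [← h x y]
    ring
  · simpa [zero_pow hn] using h 1 1

end

theorem stmt_6_general (τ k k' : ℕ) (hk : 1 ≤ k) (hkk' : k < k') (hk' : k' ≤ τ / 2) :
    ¬ ∃ A : Matrix (Fin 2) (Fin 2) ℝ, IsUnit A.det ∧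
      ∀ x y : ℝ,
        (A 0 0 * x + A 0 1 * y) ^ (τ - k) * (A 1 0 * x + A 1 1 * y) ^ k =
          x ^ (τ - k') * y ^ k' := by
  rintro ⟨A, -, hA⟩
  have := exponents_of_linear_pow_mul_pow_eq_monomial (by omega) (by omega) (by omega) (by omega) hA
  omega

theorem stmt_6 (τ k k' : ℕ) (hτ : 3 ≤ τ) (hk : 1 ≤ k) (hkk' : k < k') (hk' : k' ≤ τ / 2) :
    ¬ ∃ A : Matrix (Fin 2) (Fin 2) ℝ, IsUnit A.det ∧
      ∀ x y : ℝ,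
        (A 0 0 * x + A 0 1 * y) ^ (τ - k) * (A 1 0 * x + A 1 1 * y) ^ k =
          x ^ (τ - k') * y ^ k' :=
  stmt_6_general τ k k' hk hkk' hk'
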